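/- arXiv:1005.1355 — 3 statements merged into one kernel-verified Lean document; each statement's English description precedes it below -/
import Mathlib

section
/- In ℂ[X,Y,Z], the quartic of QL-configuration type (11) decomposes as a (2,3) torus curve: the polynomial (X² + Y²)² + t·X³·Z equals F₂(X,Y,Z)² + F₁(X,Y,Z)³·Z with F₂ = X² + Y² and F₁ = t^{1/3}·X, and the curve {(X²+Y²)² + tX³Z = 0} has an e₆ singularity at [0:0:1] for every t ≠ 0. -/
/-!
The first claim is `(C u)³ = C t`. For the singularity, shifting `x` by `2y²/(3t)` completes
the cube in `t x³ + 2x²y²`, and every remaining monomial of `(x² + y²)² + t x³` is then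
divisible by the cube of the shifted coordinate or by `y⁴`. This writes the germ as
`ξ³ W + y⁴ V` with `W(0) = V(0) = 1`; absorbing `W^{1/3}` into `ξ` and `V^{1/4}` into `y`
gives a local change of coordinates (inverse function theorem) turning it into `x³ + y⁴`.
-/

open MvPolynomial

/-- Two plane curve germs at the origin of ℂ² (given as zero sets of functions)
are topologically equivalent: there is a local homeomorphism at the origin
carrying one zero set onto the other. -/
def GermTopEquiv (f g : ℂ × ℂ → ℂ) : Prop :=
  ∃ (U V : Set (ℂ × ℂ)) (_ : IsOpen U) (_ : IsOpen V) (h0U : (0 : ℂ × ℂ) ∈ U)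
    (_ : (0 : ℂ × ℂ) ∈ V) (φ : U ≃ₜ V),
      ((φ ⟨0, h0U⟩ : ℂ × ℂ) = 0) ∧ ∀ p : U, f p = 0 ↔ g (φ p) = 0

noncomputable def X0 : MvPolynomial (Fin 3) ℂ := X 0
noncomputable def X1 : MvPolynomial (Fin 3) ℂ := X 1
noncomputable def X2 : MvPolynomial (Fin 3) ℂ := X 2

theorem GermTopEquiv.of_hasStrictFDerivAt {f g : ℂ × ℂ → ℂ} {φ : ℂ × ℂ → ℂ × ℂ}
    {L : (ℂ × ℂ) ≃L[ℂ] ℂ × ℂ} (hφ : HasStrictFDerivAt φ (L : (ℂ × ℂ) →L[ℂ] ℂ × ℂ) 0)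
    (hφ0 : φ 0 = 0) (hfg : ∀ p, g (φ p) = f p) : GermTopEquiv f g := by
  set e := hφ.toOpenPartialHomeomorph φ
  have he : ∀ p, e p = φ p := fun _ => rfl
  have h0U : (0 : ℂ × ℂ) ∈ e.source := hφ.mem_toOpenPartialHomeomorph_source
  have h0V : (0 : ℂ × ℂ) ∈ e.target := by simpa [he, hφ0] using e.map_source h0U
  refine ⟨e.source, e.target, e.open_source, e.open_target, h0U, h0V,
    e.toHomeomorphSourceTarget, ?_, fun p => ?_⟩
  · simp [he, hφ0]
  · simp [he, hfg]

theorem HasStrictFDerivAt.mul_of_eq_zero_of_eq_one {E : Type*} [NormedAddCommGroup E]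
    [NormedSpace ℂ E] {f a : E → ℂ} {f' a' : E →L[ℂ] ℂ} {x : E}
    (hf : HasStrictFDerivAt f f' x) (ha : HasStrictFDerivAt a a' x) (hfx : f x = 0)
    (hax : a x = 1) : HasStrictFDerivAt (fun y => f y * a y) f' x := by
  refine (hf.mul ha).congr_fderiv ?_
  ext
  simp [hfx, hax]

theorem germTopEquiv_cube_add_fourth {f ξ η W V : ℂ × ℂ → ℂ} {L : (ℂ × ℂ) ≃L[ℂ] ℂ × ℂ}
    {W' V' : ℂ × ℂ →L[ℂ] ℂ}
    (hξη : HasStrictFDerivAt (fun p => (ξ p, η p)) (L : (ℂ × ℂ) →L[ℂ] ℂ × ℂ) 0)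
    (hξ0 : ξ 0 = 0) (hη0 : η 0 = 0)
    (hW : HasStrictFDerivAt W W' 0) (hW0 : W 0 = 1)
    (hV : HasStrictFDerivAt V V' 0) (hV0 : V 0 = 1)
    (hf : ∀ p, f p = ξ p ^ 3 * W p + η p ^ 4 * V p) :
    GermTopEquiv f (fun p => p.1 ^ 3 + p.2 ^ 4) := by
  have ha := hW.cpow (hasStrictFDerivAt_const ((3 : ℂ)⁻¹) 0) (by simp [hW0])
  have hb := hV.cpow (hasStrictFDerivAt_const ((4 : ℂ)⁻¹) 0) (by simp [hV0])
  have hφ : HasStrictFDerivAt (fun p => (ξ p * W p ^ (3⁻¹ : ℂ), η p * V p ^ (4⁻¹ : ℂ)))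
      (L : (ℂ × ℂ) →L[ℂ] ℂ × ℂ) 0 := by
    have := (hξη.fst.mul_of_eq_zero_of_eq_one ha hξ0 (by simp [hW0])).prodMk
      (hξη.snd.mul_of_eq_zero_of_eq_one hb hη0 (by simp [hV0]))
    refine this.congr_fderiv ?_
    ext <;> simp
  refine GermTopEquiv.of_hasStrictFDerivAt hφ (by simp [hξ0, hη0]) fun p => ?_
  have h3 := Complex.cpow_nat_inv_pow (W p) three_ne_zero
  have h4 := Complex.cpow_nat_inv_pow (V p) four_ne_zero
  push_cast at h3 h4
  rw [hf, mul_pow, mul_pow, h3, h4]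

namespace TorusQuartic

noncomputable section

variable (t u : ℂ)

def shiftedX (p : ℂ × ℂ) : ℂ := u * (p.1 + 2 / (3 * t) * p.2 ^ 2)

def cubeFactor (p : ℂ × ℂ) : ℂ := 1 + (p.1 - 2 * p.2 ^ 2 / t) / t

def fourthFactor (p : ℂ × ℂ) : ℂ :=
  1 - 4 * p.1 / (3 * t) + 8 * p.1 ^ 2 / (3 * t ^ 2) - 8 * p.2 ^ 2 / (27 * t ^ 2)
    + 64 * p.1 * p.2 ^ 2 / (27 * t ^ 3) + 16 * p.2 ^ 4 / (27 * t ^ 4)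

end

variable {t u}

theorem quartic_eq_cube_add_fourth (ht : t ≠ 0) (hu : u ^ 3 = t) (p : ℂ × ℂ) :
    (p.1 ^ 2 + p.2 ^ 2) ^ 2 + t * p.1 ^ 3 =
      shiftedX t u p ^ 3 * cubeFactor t p + p.2 ^ 4 * fourthFactor t p := by
  simp only [shiftedX, cubeFactor, fourthFactor, mul_pow, hu]
  field_simp
  ring

theorem hasStrictFDerivAt_shiftedX_snd (hu : u ≠ 0) :
    HasStrictFDerivAt (fun p => (shiftedX t u p, p.2))
      ((ContinuousLinearEquiv.unitsEquivAut ℂ (Units.mk0 u hu)).prodCongr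
        (ContinuousLinearEquiv.refl ℂ ℂ) : (ℂ × ℂ) →L[ℂ] ℂ × ℂ) 0 := by
  have hy2 : HasStrictFDerivAt (fun p : ℂ × ℂ => p.2 ^ 2) (0 : (ℂ × ℂ) →L[ℂ] ℂ) 0 := by
    refine ((hasStrictFDerivAt_snd (𝕜 := ℂ) (E := ℂ) (F := ℂ)).pow 2).congr_fderiv ?_
    ext <;> simp
  have hx := ((hasStrictFDerivAt_fst (𝕜 := ℂ) (E := ℂ) (F := ℂ)).add
    (hy2.const_mul (2 / (3 * t)))).const_mul u
  refine (hx.prodMk hasStrictFDerivAt_snd).congr_fderiv ?_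
  ext <;> simp

theorem contDiff_cubeFactor : ContDiff ℂ 1 (cubeFactor t) := by
  unfold cubeFactor; fun_prop

theorem contDiff_fourthFactor : ContDiff ℂ 1 (fourthFactor t) := by
  unfold fourthFactor; fun_prop

end TorusQuartic

/-- the quartic of QL-configuration type (11) is a (2,3) torus
curve, (X²+Y²)² + tX³Z = F₂² + F₁³Z with F₂ = X²+Y², F₁ = t^{1/3}X, and in the
affine chart at [0:0:1] it has an e₆ singularity (germ equivalent to x³ + y⁴)
at the origin, for every t ≠ 0. -/
theorem stmt8 (t u : ℂ) (ht : t ≠ 0) (hu : u ^ 3 = t) :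
    ((X0 ^ 2 + X1 ^ 2) ^ 2 + C t * X0 ^ 3 * X2 =
      (X0 ^ 2 + X1 ^ 2) ^ 2 + (C u * X0) ^ 3 * X2) ∧
    GermTopEquiv (fun p => (p.1 ^ 2 + p.2 ^ 2) ^ 2 + t * p.1 ^ 3)
      (fun p => p.1 ^ 3 + p.2 ^ 4) := by
  open TorusQuartic in
  have hu0 : u ≠ 0 := by rintro rfl; simp [← hu] at ht
  refine ⟨by rw [mul_pow, ← map_pow, hu], ?_⟩
  refine germTopEquiv_cube_add_fourth (hasStrictFDerivAt_shiftedX_snd hu0)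
    (by simp [shiftedX]) rfl
    (contDiff_cubeFactor.contDiffAt.hasStrictFDerivAt one_ne_zero) (by simp [cubeFactor])
    (contDiff_fourthFactor.contDiffAt.hasStrictFDerivAt one_ne_zero) (by simp [fourthFactor])
    (quartic_eq_cube_add_fourth ht hu)
end

section
/- Let g(u,v) = v² + (c₁v − φ₁(u))³·(c₂v − φ₂(u)) ∈ ℂ{u,v} with c₁, c₂ ≠ 0, ord φ₁ = ι₁ ∈ {1,2}, ord φ₂ = ι₂ ∈ {1,2}. Then the germ {g = 0} at the origin is topologically equivalent to the singularity a_{3ι₁+ι₂−1}: v² − u^{3ι₁+ι₂} = 0. -/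
/-!
Expanding, `g = a v⁴ + p₃ v³ + (1 + p₂) v² + u ^ m p₁ v + u ^ k p₀` with `p₃ 0 = p₂ 0 = 0`,
`p₀ 0 ≠ 0`, `k = 3ι₁ + ι₂` and `m = 2ι₁ + 1`, so that `m ≤ k < 2m`. The implicit function theorem,
applied to the remainder of the division by `v² + u ^ m B v + u ^ k C` as a function of `(u, B, C)`,
splits off a quadratic factor: near the origin `g = (v² + u ^ m B v + u ^ k C) Q` with `Q 0 = 1`
and `C 0 = p₀ 0`. Completing the square, this factor is `(v + u ^ m B / 2)² - u ^ k E` with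
`E 0 = -C 0 ≠ 0` because `2m > k`, and a `k`-th root `ρ` of `E` gives the local change of
coordinates `(u, v) ↦ (u ρ, v + u ^ m B / 2)` carrying it to `v² - u ^ k`.
-/

open Filter Topology

theorem germTopEquiv_of_openPartialHomeomorph {f g : ℂ × ℂ → ℂ}
    (e : OpenPartialHomeomorph (ℂ × ℂ) (ℂ × ℂ)) (h0 : 0 ∈ e.source) (he0 : e 0 = 0)
    (hfg : ∀ᶠ p in 𝓝 0, f p = 0 ↔ g (e p) = 0) : GermTopEquiv f g := by
  obtain ⟨S, hS, hSo, h0S⟩ := eventually_nhds_iff.mp hfg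
  set e' := e.restrOpen S hSo
  have h0' : (0 : ℂ × ℂ) ∈ e'.source := by
    rw [e.restrOpen_source]; exact ⟨h0, h0S⟩
  have he0' : e' 0 = 0 := he0
  refine ⟨e'.source, e'.target, e'.open_source, e'.open_target, h0', he0' ▸ e'.map_source h0',
    e'.toHomeomorphSourceTarget, he0, fun ⟨p, hp⟩ => hS p ?_⟩
  rw [e.restrOpen_source] at hp
  exact hp.2

theorem exists_contDiffAt_pow_eq {E : Type*} [NormedAddCommGroup E] [NormedSpace ℂ E]
    {f : E → ℂ} {x : E} {n : WithTop ℕ∞} (hf : ContDiffAt ℂ n f x) (hfx : f x ≠ 0)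
    {k : ℕ} (hk : k ≠ 0) :
    ∃ ρ : E → ℂ, ContDiffAt ℂ n ρ x ∧ ρ x ≠ 0 ∧ ∀ᶠ y in 𝓝 x, ρ y ^ k = f y := by
  obtain ⟨w, hw⟩ := IsAlgClosed.exists_pow_nat_eq (f x) (Nat.pos_of_ne_zero hk)
  have hw0 : w ≠ 0 := by rintro rfl; exact hfx (by rw [← hw, zero_pow hk])
  refine ⟨fun y => w * Complex.exp (Complex.log (f y / f x) / k), ?_, by simp [hfx, hw0], ?_⟩
  · have hlog : ContDiffAt ℂ n Complex.log (f x / f x) := 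
      Complex.contDiffAt_log (by simp [hfx])
    exact contDiffAt_const.mul (Complex.contDiff_exp.contDiffAt.comp x
      ((hlog.comp x (hf.div_const _)).div_const _))
  · filter_upwards [hf.continuousAt.eventually_ne hfx] with y hy
    rw [mul_pow, ← Complex.exp_nat_mul, mul_div_cancel₀ _ (Nat.cast_ne_zero.mpr hk),
      Complex.exp_log (div_ne_zero hy hfx), hw, mul_div_cancel₀ _ hfx]

theorem exists_openPartialHomeomorph_sq_sub_pow_mul {k : ℕ} (hk : k ≠ 0) {β E : ℂ → ℂ}
    (hβ : ContDiffAt ℂ 1 β 0) (hβ0 : β 0 = 0) (hE : ContDiffAt ℂ 1 E 0) (hE0 : E 0 ≠ 0) :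
    ∃ e : OpenPartialHomeomorph (ℂ × ℂ) (ℂ × ℂ), 0 ∈ e.source ∧ e 0 = 0 ∧
      ∀ᶠ p in 𝓝 0, (p.2 + β p.1) ^ 2 - p.1 ^ k * E p.1 = (e p).2 ^ 2 - (e p).1 ^ k := by
  obtain ⟨ρ, hρ, hρ0, hρE⟩ := exists_contDiffAt_pow_eq hE hE0 hk
  set Φ : ℂ × ℂ → ℂ × ℂ := fun p => (p.1 * ρ p.1, p.2 + β p.1)
  set L : (ℂ × ℂ) ≃L[ℂ] ℂ × ℂ := .skewProd (.unitsEquivAut ℂ (.mk0 (ρ 0) hρ0))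
    (.refl ℂ ℂ) (.smulRight (1 : ℂ →L[ℂ] ℂ) (deriv β 0))
  have hΦ : ContDiffAt ℂ 1 Φ 0 := by
    have hρ' : ContDiffAt ℂ 1 (fun p : ℂ × ℂ => ρ p.1) 0 := hρ.comp (0 : ℂ × ℂ) contDiffAt_fst
    have hβ' : ContDiffAt ℂ 1 (fun p : ℂ × ℂ => β p.1) 0 := hβ.comp (0 : ℂ × ℂ) contDiffAt_fst
    fun_prop
  have hΦ' : HasFDerivAt Φ (L : (ℂ × ℂ) →L[ℂ] ℂ × ℂ) 0 := by
    have h₁ : HasDerivAt (fun u => u * ρ u) (ρ 0) 0 := by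
      simpa using (hasDerivAt_id' (0 : ℂ)).fun_mul (hρ.differentiableAt one_ne_zero).hasDerivAt
    have d₁ : HasFDerivAt (fun p : ℂ × ℂ => p.1 * ρ p.1)
        (ρ 0 • ContinuousLinearMap.fst ℂ ℂ ℂ) 0 :=
      h₁.comp_hasFDerivAt (f := Prod.fst) (0 : ℂ × ℂ) hasFDerivAt_fst
    have d₂ : HasFDerivAt (fun p : ℂ × ℂ => β p.1)
        (deriv β 0 • ContinuousLinearMap.fst ℂ ℂ ℂ) 0 :=
      (hβ.differentiableAt one_ne_zero).hasDerivAt.comp_hasFDerivAt (f := Prod.fst) (0 : ℂ × ℂ)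
        hasFDerivAt_fst
    refine (d₁.prodMk (hasFDerivAt_snd.add d₂)).congr_fderiv ?_
    ext <;> simp [L, mul_comm]
  refine ⟨hΦ.toOpenPartialHomeomorph Φ hΦ' one_ne_zero,
    hΦ.mem_toOpenPartialHomeomorph_source hΦ' one_ne_zero, by simp [Φ, hβ0], ?_⟩
  filter_upwards [continuousAt_fst.eventually hρE] with p hp
  simp only [ContDiffAt.toOpenPartialHomeomorph_coe, Φ, mul_pow, hp]

section QuarticDivision

variable (a : ℂ) (p₃ p₂ p₁ p₀ : ℂ → ℂ) (m k : ℕ)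

def cofactorCoeff₁ (u B : ℂ) : ℂ := p₃ u - a * (u ^ m * B)

def cofactorCoeff₀ (u B C : ℂ) : ℂ :=
  1 + p₂ u - u ^ m * B * cofactorCoeff₁ a p₃ m u B - a * (u ^ k * C)

/-- Dividing `a v⁴ + p₃ v³ + (1 + p₂) v² + u ^ m p₁ v + u ^ k p₀` by `v² + u ^ m B v + u ^ k C`
leaves the remainder `u ^ m R₁ v + u ^ k R₀`; this is `(R₁, R₀)` at `x = (u, B, C)`. -/
def quarticRemainder (x : ℂ × ℂ × ℂ) : ℂ × ℂ :=
  (p₁ x.1 - x.2.1 * cofactorCoeff₀ a p₃ p₂ m k x.1 x.2.1 x.2.2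
      - x.1 ^ (k - m) * x.2.2 * cofactorCoeff₁ a p₃ m x.1 x.2.1,
    p₀ x.1 - x.2.2 * cofactorCoeff₀ a p₃ p₂ m k x.1 x.2.1 x.2.2)

variable {m k}

theorem quartic_eq_mul_add_remainder (hmk : m ≤ k) (u v B C : ℂ) :
    a * v ^ 4 + p₃ u * v ^ 3 + (1 + p₂ u) * v ^ 2 + u ^ m * p₁ u * v + u ^ k * p₀ u =
      (v ^ 2 + u ^ m * B * v + u ^ k * C) *
          (a * v ^ 2 + cofactorCoeff₁ a p₃ m u B * v + cofactorCoeff₀ a p₃ p₂ m k u B C) +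
        u ^ m * (quarticRemainder a p₃ p₂ p₁ p₀ m k (u, B, C)).1 * v +
        u ^ k * (quarticRemainder a p₃ p₂ p₁ p₀ m k (u, B, C)).2 := by
  obtain ⟨j, rfl⟩ := Nat.exists_eq_add_of_le hmk
  simp only [quarticRemainder, cofactorCoeff₀, cofactorCoeff₁, Nat.add_sub_cancel_left, pow_add]
  ring

variable {a p₃ p₂ p₁ p₀}

theorem exists_quarticRemainder_eq_zero (hp₃ : ContDiffAt ℂ 1 p₃ 0) (hp₂ : ContDiffAt ℂ 1 p₂ 0)
    (hp₁ : ContDiffAt ℂ 1 p₁ 0) (hp₀ : ContDiffAt ℂ 1 p₀ 0) (hp₃0 : p₃ 0 = 0) (hp₂0 : p₂ 0 = 0)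
    (hm : m ≠ 0) (hk : k ≠ 0) :
    ∃ B C : ℂ → ℂ, ContDiffAt ℂ 1 B 0 ∧ ContDiffAt ℂ 1 C 0 ∧ C 0 = p₀ 0 ∧
      ∀ᶠ u in 𝓝 0, quarticRemainder a p₃ p₂ p₁ p₀ m k (u, B u, C u) = 0 := by
  set R := quarticRemainder a p₃ p₂ p₁ p₀ m k
  set x₀ : ℂ × ℂ × ℂ := (0, p₁ 0, p₀ 0)
  have hR0 : ∀ y, R (0, y) = (p₁ 0, p₀ 0) - y := fun y => by
    ext <;> simp [R, quarticRemainder, cofactorCoeff₀, cofactorCoeff₁, hp₃0, hp₂0, zero_pow hm,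
      zero_pow hk]
  have hR : ContDiffAt ℂ 1 R x₀ := by
    have h₃ : ContDiffAt ℂ 1 (fun x : ℂ × ℂ × ℂ => p₃ x.1) x₀ := hp₃.comp x₀ contDiffAt_fst
    have h₂ : ContDiffAt ℂ 1 (fun x : ℂ × ℂ × ℂ => p₂ x.1) x₀ := hp₂.comp x₀ contDiffAt_fst
    have h₁ : ContDiffAt ℂ 1 (fun x : ℂ × ℂ × ℂ => p₁ x.1) x₀ := hp₁.comp x₀ contDiffAt_fst
    have h₀ : ContDiffAt ℂ 1 (fun x : ℂ × ℂ × ℂ => p₀ x.1) x₀ := hp₀.comp x₀ contDiffAt_fst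
    unfold R quarticRemainder cofactorCoeff₀ cofactorCoeff₁
    fun_prop
  have hinv : (fderiv ℂ R x₀ ∘L .inr ℂ ℂ (ℂ × ℂ)).IsInvertible := by
    have hD : HasFDerivAt (fun y => R (0, y)) (fderiv ℂ R x₀ ∘L .inr ℂ ℂ (ℂ × ℂ)) (p₁ 0, p₀ 0) :=
      (hR.differentiableAt one_ne_zero).hasFDerivAt.comp _ (hasFDerivAt_prodMk_right 0 _)
    have hD' : HasFDerivAt (fun y => R (0, y)) (-.id ℂ (ℂ × ℂ)) (p₁ 0, p₀ 0) := by
      rw [funext hR0]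
      exact (hasFDerivAt_id _).const_sub _
    rw [hD.unique hD']
    exact ⟨.neg ℂ, by ext <;> simp⟩
  set ψ := hR.implicitFunction one_ne_zero hinv
  have hψ : ContDiffAt ℂ 1 ψ 0 := hR.contDiffAt_implicitFunction one_ne_zero hinv
  refine ⟨fun u => (ψ u).1, fun u => (ψ u).2, contDiffAt_fst.comp 0 hψ,
    contDiffAt_snd.comp 0 hψ, by simp [ψ, hR.implicitFunction_apply_self, x₀], ?_⟩
  filter_upwards [hR.eventually_apply_implicitFunction one_ne_zero hinv] with u hu
  rw [hu, show x₀ = (0, (p₁ 0, p₀ 0)) from rfl, hR0, sub_self]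

end QuarticDivision

theorem add_sq_sub_pow_mul_eq {m k : ℕ} (hkm : k ≤ 2 * m) (u v B C : ℂ) :
    (v + u ^ m * B / 2) ^ 2 - u ^ k * (u ^ (2 * m - k) * B ^ 2 / 4 - C) =
      v ^ 2 + u ^ m * B * v + u ^ k * C := by
  have hpow : u ^ k * u ^ (2 * m - k) = u ^ m * u ^ m := by
    rw [← pow_add, ← pow_add, Nat.add_sub_cancel' hkm, two_mul]
  linear_combination (-(B ^ 2 / 4)) * hpow

theorem germTopEquiv_quartic {a : ℂ} {p₃ p₂ p₁ p₀ : ℂ → ℂ} {m k : ℕ} (hmk : m ≤ k)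
    (hkm : k < 2 * m) (hp₃ : ContDiffAt ℂ 1 p₃ 0) (hp₂ : ContDiffAt ℂ 1 p₂ 0)
    (hp₁ : ContDiffAt ℂ 1 p₁ 0) (hp₀ : ContDiffAt ℂ 1 p₀ 0) (hp₃0 : p₃ 0 = 0) (hp₂0 : p₂ 0 = 0)
    (hp₀0 : p₀ 0 ≠ 0) :
    GermTopEquiv
      (fun p => a * p.2 ^ 4 + p₃ p.1 * p.2 ^ 3 + (1 + p₂ p.1) * p.2 ^ 2 + p.1 ^ m * p₁ p.1 * p.2
        + p.1 ^ k * p₀ p.1)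
      (fun p => p.2 ^ 2 - p.1 ^ k) := by
  have hm : m ≠ 0 := by omega
  have hk : k ≠ 0 := by omega
  obtain ⟨B, C, hB, hC, hC0, hR⟩ :=
    exists_quarticRemainder_eq_zero (a := a) hp₃ hp₂ hp₁ hp₀ hp₃0 hp₂0 hm hk
  set Q : ℂ × ℂ → ℂ := fun p => a * p.2 ^ 2 + cofactorCoeff₁ a p₃ m p.1 (B p.1) * p.2
    + cofactorCoeff₀ a p₃ p₂ m k p.1 (B p.1) (C p.1)
  have hQ : ∀ᶠ p in 𝓝 0, Q p ≠ 0 := by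
    have hQc : ContDiffAt ℂ 1 Q 0 := by
      have h₃ : ContDiffAt ℂ 1 (fun p : ℂ × ℂ => p₃ p.1) 0 := hp₃.comp (0 : ℂ × ℂ) contDiffAt_fst
      have h₂ : ContDiffAt ℂ 1 (fun p : ℂ × ℂ => p₂ p.1) 0 := hp₂.comp (0 : ℂ × ℂ) contDiffAt_fst
      have hB' : ContDiffAt ℂ 1 (fun p : ℂ × ℂ => B p.1) 0 := hB.comp (0 : ℂ × ℂ) contDiffAt_fst
      have hC' : ContDiffAt ℂ 1 (fun p : ℂ × ℂ => C p.1) 0 := hC.comp (0 : ℂ × ℂ) contDiffAt_fst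
      unfold Q cofactorCoeff₀ cofactorCoeff₁
      fun_prop
    exact hQc.continuousAt.eventually_ne
      (by simp [Q, cofactorCoeff₀, cofactorCoeff₁, hp₂0, zero_pow hm, zero_pow hk])
  obtain ⟨e, he0, he, hsq⟩ := exists_openPartialHomeomorph_sq_sub_pow_mul hk
    (β := fun u => u ^ m * B u / 2) (E := fun u => u ^ (2 * m - k) * B u ^ 2 / 4 - C u)
    (by fun_prop) (by simp [hm]) (by fun_prop) (by simp [hC0, hp₀0, show 2 * m - k ≠ 0 by omega])
  refine germTopEquiv_of_openPartialHomeomorph e he0 he ?_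
  filter_upwards [continuousAt_fst.eventually hR, hQ, hsq] with p hRp hQp hsqp
  obtain ⟨hR₁, hR₀⟩ := Prod.ext_iff.mp hRp
  rw [quartic_eq_mul_add_remainder a p₃ p₂ p₁ p₀ hmk p.1 p.2 (B p.1) (C p.1), hR₁, hR₀, ← hsqp,
    add_sq_sub_pow_mul_eq hkm.le]
  simp only [Prod.fst_zero, Prod.snd_zero, mul_zero, zero_mul, add_zero]
  exact mul_eq_zero.trans (or_iff_left hQp)

namespace Polynomial

@[fun_prop]
theorem contDiff_eval {𝕜 : Type*} [NontriviallyNormedField 𝕜] (φ : 𝕜[X]) {n : WithTop ℕ∞} :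
    ContDiff 𝕜 n fun x => φ.eval x :=
  φ.contDiff_aeval n

theorem exists_eq_X_pow_mul_of_natTrailingDegree_eq {R : Type*} [CommRing R] {φ : R[X]}
    (hφ : φ ≠ 0) {n : ℕ} (hn : φ.natTrailingDegree = n) :
    ∃ ψ : R[X], φ = X ^ n * ψ ∧ ψ.eval 0 ≠ 0 := by
  obtain ⟨ψ, hφψ, hψ⟩ := φ.exists_eq_pow_rootMultiplicity_mul_and_not_dvd hφ 0
  rw [rootMultiplicity_eq_natTrailingDegree', hn, map_zero, sub_zero] at hφψ
  rw [map_zero, sub_zero, X_dvd_iff, coeff_zero_eq_eval_zero] at hψ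
  exact ⟨ψ, hφψ, hψ⟩

end Polynomial

theorem stmt10_general (c₁ c₂ : ℂ)
    (ι₁ ι₂ : ℕ) (hι₁ : ι₁ = 1 ∨ ι₁ = 2) (hι₂ : ι₂ = 1 ∨ ι₂ = 2)
    (φ₁ φ₂ : Polynomial ℂ) (hφ₁ : φ₁ ≠ 0) (hφ₂ : φ₂ ≠ 0)
    (ho1 : φ₁.natTrailingDegree = ι₁) (ho2 : φ₂.natTrailingDegree = ι₂) :
    GermTopEquiv
      (fun p => p.2 ^ 2 + (c₁ * p.2 - φ₁.eval p.1) ^ 3 * (c₂ * p.2 - φ₂.eval p.1))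
      (fun p => p.2 ^ 2 - p.1 ^ (3 * ι₁ + ι₂)) := by
  obtain ⟨ψ₁, hψ₁, hψ₁0⟩ := Polynomial.exists_eq_X_pow_mul_of_natTrailingDegree_eq hφ₁ ho1
  obtain ⟨ψ₂, hψ₂, hψ₂0⟩ := Polynomial.exists_eq_X_pow_mul_of_natTrailingDegree_eq hφ₂ ho2
  obtain ⟨j₁, rfl⟩ : ∃ j, ι₁ = j + 1 := ⟨ι₁ - 1, by omega⟩
  obtain ⟨j₂, rfl⟩ : ∃ j, ι₂ = j + 1 := ⟨ι₂ - 1, by omega⟩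
  convert germTopEquiv_quartic (a := c₁ ^ 3 * c₂) (m := 2 * j₁ + 3) (k := 3 * (j₁ + 1) + (j₂ + 1))
    (p₃ := fun u => -(c₁ ^ 3 * φ₂.eval u) - 3 * c₁ ^ 2 * c₂ * φ₁.eval u)
    (p₂ := fun u => 3 * c₁ ^ 2 * φ₁.eval u * φ₂.eval u + 3 * c₁ * c₂ * φ₁.eval u ^ 2)
    (p₁ := fun u => -(ψ₁.eval u ^ 2 * (3 * c₁ * u ^ j₂ * ψ₂.eval u + c₂ * u ^ j₁ * ψ₁.eval u)))
    (p₀ := fun u => ψ₁.eval u ^ 3 * ψ₂.eval u)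
    (by omega) (by omega) (by fun_prop) (by fun_prop) (by fun_prop) (by fun_prop)
    (by simp [hψ₁, hψ₂]) (by simp [hψ₁, hψ₂]) (by simp [hψ₁0, hψ₂0]) using 1
  funext p
  simp only [hψ₁, hψ₂, Polynomial.eval_mul, Polynomial.eval_pow, Polynomial.eval_X]
  ring

/-- Lemma 1(3): for g(u,v) = v² + (c₁v − φ₁(u))³(c₂v − φ₂(u))
with c₁, c₂ ≠ 0, ord φ₁ = ι₁ ∈ {1,2}, ord φ₂ = ι₂ ∈ {1,2}, the germ {g = 0}
at the origin is topologically equivalent to a_{3ι₁+ι₂−1} : v² − u^{3ι₁+ι₂} = 0. -/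
theorem stmt10 (c₁ c₂ : ℂ) (h1 : c₁ ≠ 0) (h2 : c₂ ≠ 0)
    (ι₁ ι₂ : ℕ) (hι₁ : ι₁ = 1 ∨ ι₁ = 2) (hι₂ : ι₂ = 1 ∨ ι₂ = 2)
    (φ₁ φ₂ : Polynomial ℂ) (hφ₁ : φ₁ ≠ 0) (hφ₂ : φ₂ ≠ 0)
    (ho1 : φ₁.natTrailingDegree = ι₁) (ho2 : φ₂.natTrailingDegree = ι₂) :
    GermTopEquiv
      (fun p => p.2 ^ 2 + (c₁ * p.2 - φ₁.eval p.1) ^ 3 * (c₂ * p.2 - φ₂.eval p.1))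
      (fun p => p.2 ^ 2 - p.1 ^ (3 * ι₁ + ι₂)) :=
  stmt10_general c₁ c₂ ι₁ ι₂ hι₁ hι₂ φ₁ φ₂ hφ₁ hφ₂ ho1 ho2
end

section
/- In ℂ[x,z], let f₂(x,z) = x² + a₁·xz + a₀·z², f₃(x,z) = x³ + c₂·z² + c₃·x²z + c₄·xz² + b₀·z³ (so the degree-2-in-Z coefficient in x of f₂³ − f₃² is constrained). If g(x,z) := (f₂³ − f₃²)/z² is a polynomial and c₂ ≠ 0, then the lowest-order part of g at the origin is −c₂²·z² − 2c₂·x³; in particular g has an a₂ singularity (cusp) at the origin. -/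
open MvPolynomial

noncomputable def x : MvPolynomial (Fin 2) ℂ := X 0
noncomputable def z : MvPolynomial (Fin 2) ℂ := X 1

/-! Divisibility of `f₂³ - f₃²` by `z²` forces `3a₁ = 2c₃`, after which `g` is an explicit
quartic in `z` with coefficients in `ℂ[x]`; its monomials other than `-c₂²z²` and `-2c₂x³` all
have weighted degree at least `7`.

For the cusp, write `g = x³A + x²Bz + E₂z² + E₃z³ + E₄z⁴` with `A 0 = -2c₂` and `E₂ 0 = -c₂²`
nonzero. The implicit function theorem splits off a factor `z² + p(x)z + q(x)` whose cofactor is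
a unit near the origin (Hensel's lemma in a smooth family). Comparing coefficients gives
`p = x²·p'` and `q = x³·q'`, so the discriminant `q - p²/4` is `x³` times a unit `v`. With `w` a
cube root of `v`, the local diffeomorphism `(x, z) ↦ (x·w(x), z + p(x)/2)` carries `{g = 0}` onto
`{z² + x³ = 0}`. -/

open Filter Topology

theorem GermTopEquiv.of_hasStrictFDerivAt_s12 {f g : ℂ × ℂ → ℂ} {Φ : ℂ × ℂ → ℂ × ℂ}
    {Φ' : (ℂ × ℂ) ≃L[ℂ] ℂ × ℂ} (hΦ : HasStrictFDerivAt Φ (Φ' : ℂ × ℂ →L[ℂ] ℂ × ℂ) 0)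
    (hΦ0 : Φ 0 = 0) (hfg : ∀ᶠ P in 𝓝 0, f P = 0 ↔ g (Φ P) = 0) : GermTopEquiv f g := by
  obtain ⟨U, hU, hUo, h0U⟩ := eventually_nhds_iff.1 hfg
  let e := (hΦ.toOpenPartialHomeomorph Φ).restrOpen U hUo
  have h0 : (0 : ℂ × ℂ) ∈ e.source := ⟨hΦ.mem_toOpenPartialHomeomorph_source, h0U⟩
  exact ⟨e.source, e.target, e.open_source, e.open_target, h0, hΦ0 ▸ e.map_source h0,
    e.toHomeomorphSourceTarget, hΦ0, fun P => hU P P.2.2⟩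

open ContinuousLinearMap in
theorem exists_hasStrictFDerivAt_shear {a b : ℂ → ℂ} {a' b' : ℂ} {P₀ : ℂ × ℂ}
    (ha : HasStrictDerivAt a a' P₀.1) (hb : HasStrictDerivAt b b' P₀.1) (ha' : a' ≠ 0) :
    ∃ Φ' : (ℂ × ℂ) ≃L[ℂ] ℂ × ℂ,
      HasStrictFDerivAt (fun P : ℂ × ℂ => (a P.1, P.2 + b P.1)) (Φ' : ℂ × ℂ →L[ℂ] ℂ × ℂ) P₀ := by
  let D : ℂ × ℂ →L[ℂ] ℂ × ℂ := (a' • fst ℂ ℂ ℂ).prod (snd ℂ ℂ ℂ + b' • fst ℂ ℂ ℂ)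
  have hD : D.IsInvertible := by
    refine .of_inverse (g := (a'⁻¹ • fst ℂ ℂ ℂ).prod (snd ℂ ℂ ℂ - (b' * a'⁻¹) • fst ℂ ℂ ℂ))
      ?_ ?_ <;> ext <;> simp [D, ha']
  obtain ⟨Φ', hΦ'⟩ := hD
  refine ⟨Φ', hΦ' ▸ ?_⟩
  exact (ha.comp_hasStrictFDerivAt P₀ (hasStrictFDerivAt_fst (p := P₀))).prodMk
    (hasStrictFDerivAt_snd.add (hb.comp_hasStrictFDerivAt P₀ (hasStrictFDerivAt_fst (p := P₀))))

theorem exists_pow_eq_of_contDiffAt {E : Type*} [NormedAddCommGroup E] [NormedSpace ℂ E]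
    {k : WithTop ℕ∞} {m : ℕ} (hm : m ≠ 0) {v : E → ℂ} {x₀ : E}
    (hv : ContDiffAt ℂ k v x₀) (hv₀ : v x₀ ≠ 0) :
    ∃ w : E → ℂ, ContDiffAt ℂ k w x₀ ∧ w x₀ ≠ 0 ∧ ∀ x, w x ^ m = v x := by
  obtain ⟨ζ, hζ⟩ := IsAlgClosed.exists_pow_nat_eq (v x₀) (Nat.pos_of_ne_zero hm)
  have hζ₀ : ζ ≠ 0 := by rintro rfl; exact hv₀ (by simp [← hζ, hm])
  refine ⟨fun x => ζ * (v x / v x₀) ^ (m⁻¹ : ℂ), ?_, by simp [hζ₀, hv₀], fun x => ?_⟩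
  · have hroot : ContDiffAt ℂ k (fun u : ℂ => u ^ (m⁻¹ : ℂ)) (v x₀ / v x₀) := by
      rw [div_self hv₀]
      exact (analyticAt_id.cpow analyticAt_const (by simp)).contDiffAt
    exact contDiffAt_const.mul (hroot.comp (g := fun u : ℂ => u ^ (m⁻¹ : ℂ)) x₀ (hv.div_const _))
  · rw [mul_pow, Complex.cpow_nat_inv_pow _ hm, hζ]
    field_simp

open ContinuousLinearMap in
theorem exists_quadratic_factor {n : WithTop ℕ∞} (hn : n ≠ 0) {E₀ E₁ E₂ E₃ E₄ : ℂ → ℂ}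
    (h₀ : ContDiffAt ℂ n E₀ 0) (h₁ : ContDiffAt ℂ n E₁ 0) (h₂ : ContDiffAt ℂ n E₂ 0)
    (h₃ : ContDiffAt ℂ n E₃ 0) (h₄ : ContDiffAt ℂ n E₄ 0)
    (hE₀ : E₀ 0 = 0) (hE₁ : E₁ 0 = 0) (hE₂ : E₂ 0 ≠ 0) :
    ∃ p q r₀ r₁ : ℂ → ℂ, ContDiffAt ℂ n p 0 ∧ ContDiffAt ℂ n q 0 ∧ ContDiffAt ℂ n r₀ 0 ∧
      ContDiffAt ℂ n r₁ 0 ∧ p 0 = 0 ∧ q 0 = 0 ∧ r₀ 0 = E₂ 0 ∧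
      ∀ᶠ X in 𝓝 0, q X * r₀ X = E₀ X ∧ p X * r₀ X + q X * r₁ X = E₁ X ∧
        r₀ X + p X * r₁ X + q X * E₄ X = E₂ X ∧ r₁ X + p X * E₄ X = E₃ X := by
  let R₁ : ℂ × ℂ × ℂ → ℂ := fun u => E₃ u.1 - u.2.1 * E₄ u.1
  let R₀ : ℂ × ℂ × ℂ → ℂ := fun u => E₂ u.1 - u.2.1 * R₁ u - u.2.2 * E₄ u.1
  -- `F (X, p, q) = 0` says that `Z² + pZ + q` divides the quartic, with quotient
  -- `E₄ Z² + R₁ Z + R₀`; at the origin `∂F/∂(p, q)` is triangular with diagonal `E₂ 0`.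
  let F : ℂ × ℂ × ℂ → ℂ × ℂ := fun u =>
    (u.2.1 * R₀ u + u.2.2 * R₁ u - E₁ u.1, u.2.2 * R₀ u - E₀ u.1)
  have hF : ContDiffAt ℂ n F 0 := by fun_prop
  set k := E₂ 0
  set m := E₃ 0
  let L : ℂ × ℂ →L[ℂ] ℂ × ℂ := (k • fst ℂ ℂ ℂ + m • snd ℂ ℂ ℂ).prod (k • snd ℂ ℂ ℂ)
  have hL : L.IsInvertible := by
    refine .of_inverse (g := (k⁻¹ • fst ℂ ℂ ℂ - (m * k⁻¹ * k⁻¹) • snd ℂ ℂ ℂ).prod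
      (k⁻¹ • snd ℂ ℂ ℂ)) ?_ ?_ <;> ext <;> simp [L, hE₂] <;> field_simp <;> ring
  have hFL : HasFDerivAt (fun y : ℂ × ℂ => F (0, y)) L 0 := by
    have hR₀ : DifferentiableAt ℂ (fun y : ℂ × ℂ => R₀ (0, y)) 0 := by simp only [R₀, R₁]; fun_prop
    have hR₁ : DifferentiableAt ℂ (fun y : ℂ × ℂ => R₁ (0, y)) 0 := by simp only [R₁]; fun_prop
    refine ((((hasFDerivAt_fst.mul hR₀.hasFDerivAt).add
      (hasFDerivAt_snd.mul hR₁.hasFDerivAt)).sub_const (E₁ 0)).prodMk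
      ((hasFDerivAt_snd.mul hR₀.hasFDerivAt).sub_const (E₀ 0))).congr_fderiv ?_
    ext <;> simp [L, R₀, R₁, k, m]
  have hpartial : fderiv ℂ F 0 ∘L inr ℂ ℂ (ℂ × ℂ) = L :=
    ((hF.hasStrictFDerivAt hn).hasFDerivAt.comp (0 : ℂ × ℂ)
      (hasFDerivAt_prodMk_right (0 : ℂ) (0 : ℂ × ℂ))).unique hFL
  let ψ := hF.implicitFunction hn (hpartial ▸ hL)
  have hψ : ContDiffAt ℂ n ψ 0 := hF.contDiffAt_implicitFunction hn _
  have hψ₀ : ψ 0 = 0 := hF.implicitFunction_apply_self hn _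
  have hFψ : ∀ᶠ X in 𝓝 0, F (X, ψ X) = 0 := by
    simpa [F, hE₀, hE₁] using hF.eventually_apply_implicitFunction hn (hpartial ▸ hL)
  refine ⟨fun X => (ψ X).1, fun X => (ψ X).2, fun X => R₀ (X, ψ X), fun X => R₁ (X, ψ X),
    hψ.fst, hψ.snd, ?_, ?_, by simp [hψ₀], by simp [hψ₀], by simp [R₀, R₁, hψ₀, k], ?_⟩
  · simp only [R₀, R₁]; fun_prop
  · simp only [R₁]; fun_prop
  filter_upwards [hFψ] with X hX
  simp only [F, Prod.ext_iff, Prod.fst_zero, Prod.snd_zero, sub_eq_zero] at hX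
  exact ⟨hX.2, hX.1, by simp only [R₀]; ring, by simp only [R₁]; ring⟩

theorem exists_cube_mul_eq_discrim {n : WithTop ℕ∞} {p q r₀ r₁ A B : ℂ → ℂ}
    (hr₀ : ContDiffAt ℂ n r₀ 0) (hr₁ : ContDiffAt ℂ n r₁ 0) (hA : ContDiffAt ℂ n A 0)
    (hB : ContDiffAt ℂ n B 0) (hr₀₀ : r₀ 0 ≠ 0) (hA₀ : A 0 ≠ 0)
    (hq : ∀ᶠ X in 𝓝 0, q X * r₀ X = X ^ 3 * A X)
    (hp : ∀ᶠ X in 𝓝 0, p X * r₀ X + q X * r₁ X = X ^ 2 * B X) :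
    ∃ v : ℂ → ℂ, ContDiffAt ℂ n v 0 ∧ v 0 ≠ 0 ∧ ∀ᶠ X in 𝓝 0, q X - p X ^ 2 / 4 = X ^ 3 * v X := by
  let q' := fun X => A X / r₀ X
  let p' := fun X => (B X - X * q' X * r₁ X) / r₀ X
  refine ⟨fun X => q' X - X * p' X ^ 2 / 4, by fun_prop (disch := exact hr₀₀),
    by simpa [q', p'] using div_ne_zero hA₀ hr₀₀, ?_⟩
  filter_upwards [hq, hp, hr₀.continuousAt.eventually_ne hr₀₀] with X hq hp hX
  have hq' : q X = X ^ 3 * q' X := by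
    simp only [q']; field_simp; linear_combination hq
  have hp' : p X = X ^ 2 * p' X := by
    simp only [p', q']; field_simp; linear_combination r₀ X * hp - r₁ X * hq
  rw [hq', hp']
  ring

theorem germTopEquiv_cusp_of_quartic {A B E₂ E₃ E₄ : ℂ → ℂ} (hA : ContDiffAt ℂ 1 A 0)
    (hB : ContDiffAt ℂ 1 B 0) (h₂ : ContDiffAt ℂ 1 E₂ 0) (h₃ : ContDiffAt ℂ 1 E₃ 0)
    (h₄ : ContDiffAt ℂ 1 E₄ 0) (hA₀ : A 0 ≠ 0) (hE₂ : E₂ 0 ≠ 0) {f : ℂ × ℂ → ℂ}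
    (hf : ∀ X Z, f (X, Z) =
      X ^ 3 * A X + X ^ 2 * B X * Z + E₂ X * Z ^ 2 + E₃ X * Z ^ 3 + E₄ X * Z ^ 4) :
    GermTopEquiv f (fun P => P.2 ^ 2 + P.1 ^ 3) := by
  obtain ⟨p, q, r₀, r₁, hp, -, hr₀, hr₁, hp₀, -, hr₀₀, hfac⟩ :=
    exists_quadratic_factor one_ne_zero (E₀ := fun X => X ^ 3 * A X)
      (E₁ := fun X => X ^ 2 * B X) (by fun_prop) (by fun_prop) h₂ h₃ h₄ (by simp) (by simp) hE₂
  obtain ⟨v, hv, hv₀, hdisc⟩ := exists_cube_mul_eq_discrim hr₀ hr₁ hA hB (hr₀₀ ▸ hE₂) hA₀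
    (hfac.mono fun _ h => h.1) (hfac.mono fun _ h => h.2.1)
  obtain ⟨w, hw, hw₀, hw₃⟩ := exists_pow_eq_of_contDiffAt three_ne_zero hv hv₀
  have hXw : HasStrictDerivAt (fun X => X * w X) (w 0) 0 := by
    simpa using (hasStrictDerivAt_id (0 : ℂ)).fun_mul (hw.hasStrictDerivAt one_ne_zero)
  obtain ⟨Φ', hΦ'⟩ := exists_hasStrictFDerivAt_shear (P₀ := 0) hXw
    ((hp.hasStrictDerivAt one_ne_zero).div_const 2) hw₀
  refine GermTopEquiv.of_hasStrictFDerivAt_s12 hΦ' (by simp [hp₀]) ?_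
  have hcof : ∀ᶠ P : ℂ × ℂ in 𝓝 0, E₄ P.1 * P.2 ^ 2 + r₁ P.1 * P.2 + r₀ P.1 ≠ 0 := by
    refine ContinuousAt.eventually_ne ?_ (by simpa [hr₀₀] using hE₂)
    fun_prop (disch := assumption)
  filter_upwards [hcof, (continuous_fst.tendsto' (0 : ℂ × ℂ) 0 rfl).eventually (hfac.and hdisc)]
    with ⟨X, Z⟩ hcof ⟨⟨h₀, h₁, h₂, h₃⟩, hd⟩
  have hfactor : f (X, Z) = (Z ^ 2 + p X * Z + q X) * (E₄ X * Z ^ 2 + r₁ X * Z + r₀ X) := by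
    rw [hf]
    linear_combination (-1 : ℂ) * h₀ - Z * h₁ - Z ^ 2 * h₂ - Z ^ 3 * h₃
  have hquad : Z ^ 2 + p X * Z + q X = (Z + p X / 2) ^ 2 + (X * w X) ^ 3 := by
    rw [mul_pow, hw₃]
    linear_combination hd
  simp [hfactor, hquad, hcof]

noncomputable def torusQuotient (a₁ a₀ c₂ c₃ c₄ b₀ : ℂ) : MvPolynomial (Fin 2) ℂ :=
  x ^ 3 * (C (-2 * c₂) + C (-2 * c₄ - c₃ ^ 2 + 3 * a₀ + 3 * a₁ ^ 2) * x)
  + x ^ 2 * z * (C (-2 * c₂ * c₃) + C (-2 * b₀ - 2 * c₃ * c₄ + 6 * a₁ * a₀ + a₁ ^ 3) * x)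
  + z ^ 2 * (C (-c₂ ^ 2) + C (-2 * c₂ * c₄) * x
    + C (-c₄ ^ 2 - 2 * c₃ * b₀ + 3 * a₀ ^ 2 + 3 * a₁ ^ 2 * a₀) * x ^ 2)
  + z ^ 3 * (C (-2 * c₂ * b₀) + C (-2 * c₄ * b₀ + 3 * a₁ * a₀ ^ 2) * x)
  + C (a₀ ^ 3 - b₀ ^ 2) * z ^ 4

theorem torus_sextic_eq (a₁ a₀ c₂ c₃ c₄ b₀ : ℂ) :
    (x ^ 2 + C a₁ * x * z + C a₀ * z ^ 2) ^ 3
      - (x ^ 3 + C c₂ * z ^ 2 + C c₃ * x ^ 2 * z + C c₄ * x * z ^ 2 + C b₀ * z ^ 3) ^ 2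
      = z ^ 2 * torusQuotient a₁ a₀ c₂ c₃ c₄ b₀ + C (3 * a₁ - 2 * c₃) * x ^ 5 * z := by
  simp only [torusQuotient, map_add, map_sub, map_mul, map_neg, map_pow, map_ofNat]
  ring

theorem eq_torusQuotient_of_z_sq_mul_eq {a₁ a₀ c₂ c₃ c₄ b₀ : ℂ} {g : MvPolynomial (Fin 2) ℂ}
    (hg : z ^ 2 * g = (x ^ 2 + C a₁ * x * z + C a₀ * z ^ 2) ^ 3
      - (x ^ 3 + C c₂ * z ^ 2 + C c₃ * x ^ 2 * z + C c₄ * x * z ^ 2 + C b₀ * z ^ 3) ^ 2) :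
    g = torusQuotient a₁ a₀ c₂ c₃ c₄ b₀ := by
  rw [torus_sextic_eq] at hg
  have hz : z ≠ 0 := X_ne_zero 1
  have hdiff : z * (g - torusQuotient a₁ a₀ c₂ c₃ c₄ b₀) = C (3 * a₁ - 2 * c₃) * x ^ 5 := by
    refine mul_left_cancel₀ hz ?_
    linear_combination hg
  have hc : 3 * a₁ - 2 * c₃ = 0 := by
    simpa [x, z] using (congrArg (eval ![1, 0]) hdiff).symm
  rw [hc, C_0, zero_mul, mul_eq_zero, sub_eq_zero] at hdiff
  exact hdiff.resolve_left hz

theorem coeff_x_pow_mul_z_pow_mul_eq_zero {a b : ℕ} {d : Fin 2 →₀ ℕ} (h : ¬(a ≤ d 0 ∧ b ≤ d 1))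
    (P : MvPolynomial (Fin 2) ℂ) : coeff d (x ^ a * z ^ b * P) = 0 := by
  have hxz : x ^ a * z ^ b = monomial (Finsupp.single 0 a + Finsupp.single 1 b) 1 := by
    simp [x, z, X_pow_eq_monomial, monomial_mul]
  rw [hxz, coeff_monomial_mul', if_neg]
  contrapose! h
  exact ⟨by simpa using h 0, by simpa using h 1⟩

theorem torusQuotient_sub_leading (a₁ a₀ c₂ c₃ c₄ b₀ : ℂ) :
    torusQuotient a₁ a₀ c₂ c₃ c₄ b₀ - (-(C (c₂ ^ 2)) * z ^ 2 - C (2 * c₂) * x ^ 3)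
      = x ^ 4 * z ^ 0 * C (-2 * c₄ - c₃ ^ 2 + 3 * a₀ + 3 * a₁ ^ 2)
        + x ^ 2 * z ^ 1 * (C (-2 * c₂ * c₃) + C (-2 * b₀ - 2 * c₃ * c₄ + 6 * a₁ * a₀ + a₁ ^ 3) * x)
        + x ^ 1 * z ^ 2 * (C (-2 * c₂ * c₄)
          + C (-c₄ ^ 2 - 2 * c₃ * b₀ + 3 * a₀ ^ 2 + 3 * a₁ ^ 2 * a₀) * x)
        + x ^ 0 * z ^ 3 * (C (-2 * c₂ * b₀) + C (-2 * c₄ * b₀ + 3 * a₁ * a₀ ^ 2) * x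
          + C (a₀ ^ 3 - b₀ ^ 2) * z) := by
  simp only [torusQuotient, map_add, map_sub, map_mul, map_neg, map_pow, map_ofNat]
  ring

theorem weight_gt_of_coeff_torusQuotient_sub_ne_zero (a₁ a₀ c₂ c₃ c₄ b₀ : ℂ) (d : Fin 2 →₀ ℕ)
    (hd : coeff d (torusQuotient a₁ a₀ c₂ c₃ c₄ b₀
      - (-(C (c₂ ^ 2)) * z ^ 2 - C (2 * c₂) * x ^ 3)) ≠ 0) :
    2 * d 0 + 3 * d 1 > 6 := by
  contrapose! hd
  rw [torusQuotient_sub_leading]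
  simp only [coeff_add]
  rw [coeff_x_pow_mul_z_pow_mul_eq_zero (by omega), coeff_x_pow_mul_z_pow_mul_eq_zero (by omega),
    coeff_x_pow_mul_z_pow_mul_eq_zero (by omega), coeff_x_pow_mul_z_pow_mul_eq_zero (by omega)]
  simp

theorem germTopEquiv_torusQuotient {a₁ a₀ c₂ c₃ c₄ b₀ : ℂ} (hc₂ : c₂ ≠ 0) :
    GermTopEquiv (fun P => eval ![P.1, P.2] (torusQuotient a₁ a₀ c₂ c₃ c₄ b₀))
      (fun P => P.2 ^ 2 + P.1 ^ 3) :=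
  germTopEquiv_cusp_of_quartic
    (A := fun X => -2 * c₂ + (-2 * c₄ - c₃ ^ 2 + 3 * a₀ + 3 * a₁ ^ 2) * X)
    (B := fun X => -2 * c₂ * c₃ + (-2 * b₀ - 2 * c₃ * c₄ + 6 * a₁ * a₀ + a₁ ^ 3) * X)
    (E₂ := fun X => -c₂ ^ 2 - 2 * c₂ * c₄ * X
      + (-c₄ ^ 2 - 2 * c₃ * b₀ + 3 * a₀ ^ 2 + 3 * a₁ ^ 2 * a₀) * X ^ 2)
    (E₃ := fun X => -2 * c₂ * b₀ + (-2 * c₄ * b₀ + 3 * a₁ * a₀ ^ 2) * X)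
    (E₄ := fun _ => a₀ ^ 3 - b₀ ^ 2)
    (by fun_prop) (by fun_prop) (by fun_prop) (by fun_prop) (by fun_prop)
    (by simpa using hc₂) (by simpa using hc₂) (fun X Z => by simp [torusQuotient, x, z]; ring)

/-- in ℂ[x,z], with f₂ = x² + a₁xz + a₀z² and
f₃ = x³ + c₂z² + c₃x²z + c₄xz² + b₀z³, if g := (f₂³ − f₃²)/z² is a polynomial
and c₂ ≠ 0, then g ≡ −c₂²z² − 2c₂x³ modulo terms of weighted order > 6
(x of weight 2, z of weight 3); in particular the germ of {g = 0} at the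
origin is an a₂ singularity (cusp), equivalent to z² + x³ = 0. -/
theorem stmt12 (a₁ a₀ c₂ c₃ c₄ b₀ : ℂ) (hc₂ : c₂ ≠ 0)
    (f₂ f₃ g : MvPolynomial (Fin 2) ℂ)
    (hf₂ : f₂ = x ^ 2 + C a₁ * x * z + C a₀ * z ^ 2)
    (hf₃ : f₃ = x ^ 3 + C c₂ * z ^ 2 + C c₃ * x ^ 2 * z + C c₄ * x * z ^ 2
            + C b₀ * z ^ 3)
    (hg : z ^ 2 * g = f₂ ^ 3 - f₃ ^ 2) :
    (∀ d : Fin 2 →₀ ℕ,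
        coeff d (g - (-(C (c₂ ^ 2)) * z ^ 2 - C (2 * c₂) * x ^ 3)) ≠ 0 →
        2 * d 0 + 3 * d 1 > 6) ∧
    GermTopEquiv (fun p => eval ![p.1, p.2] g) (fun p => p.2 ^ 2 + p.1 ^ 3) := by
  subst hf₂ hf₃
  obtain rfl := eq_torusQuotient_of_z_sq_mul_eq hg
  exact ⟨weight_gt_of_coeff_torusQuotient_sub_ne_zero a₁ a₀ c₂ c₃ c₄ b₀,
    germTopEquiv_torusQuotient hc₂⟩
end
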